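/- arXiv:2605.13770 — 4 statements merged into one kernel-verified Lean document; each statement's English description precedes it below -/
import Mathlib

section
/- In a finite join-semidistributive lattice L, for every cover relation x ⋖ y the set {c ∈ L : x ∨ c = y} is nonempty and closed under meets, hence has a unique minimum element. -/
/-- In a finite join-semidistributive lattice, for every cover `x ⋖ y`
the set `{c | x ⊔ c = y}` is nonempty, closed under meets, and has a unique minimum. -/
theorem stmt3 {L : Type*} [Lattice L] [Fintype L]
    (jsd : ∀ x y z : L, x ⊔ y = x ⊔ z → x ⊔ y = x ⊔ (y ⊓ z))
    (x y : L) (hxy : x ⋖ y) :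
    ({c : L | x ⊔ c = y}.Nonempty) ∧
    (∀ c d : L, x ⊔ c = y → x ⊔ d = y → x ⊔ (c ⊓ d) = y) ∧
    (∃! m : L, IsLeast {c : L | x ⊔ c = y} m) := by
  have hne : ({c : L | x ⊔ c = y}.Nonempty) := ⟨y, sup_eq_right.mpr hxy.1.le⟩
  have hmeet : ∀ c d : L, x ⊔ c = y → x ⊔ d = y → x ⊔ (c ⊓ d) = y := by
    intro c d hc hd
    have := jsd x c d (hc.trans hd.symm)
    rw [hc] at this; exact this.symm
  refine ⟨hne, hmeet, ?_⟩
  classical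
  set S : Finset L := Finset.univ.filter (fun c => x ⊔ c = y) with hS
  have hSne : S.Nonempty := ⟨y, by simp [hS, sup_eq_right.mpr hxy.1.le]⟩
  have hmem : ∀ c, c ∈ S ↔ x ⊔ c = y := by intro c; simp [hS]
  have hminS : S.inf' hSne id ∈ S := by
    apply Finset.inf'_mem (↑S : Set L)
    · intro a ha b hb
      simp only [Finset.mem_coe, hmem] at *
      exact hmeet a b ha hb
    · intro i hi; exact hi
  refine ⟨S.inf' hSne id, ⟨(hmem _).mp hminS, fun c hc => Finset.inf'_le id ((hmem c).mpr hc)⟩, ?_⟩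
  intro m hm
  exact le_antisymm (hm.2 ((hmem _).mp hminS)) (Finset.inf'_le id ((hmem m).mpr hm.1))
end

section
/- The join (simplicial join) of two vertex decomposable simplicial complexes on disjoint vertex sets is vertex decomposable. -/
variable {V : Type*} [DecidableEq V]

/-- A (finite abstract) simplicial complex: a family of finite sets closed
under taking subsets. -/
def IsComplex (Δ : Finset (Finset V)) : Prop :=
  ∀ F ∈ Δ, ∀ G ⊆ F, G ∈ Δ

/-- The link of a vertex `v`. -/
def linkOf (Δ : Finset (Finset V)) (v : V) : Finset (Finset V) :=
  Δ.filter (fun G => v ∉ G ∧ insert v G ∈ Δ)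

/-- The deletion of a vertex `v`. -/
def deletionOf (Δ : Finset (Finset V)) (v : V) : Finset (Finset V) :=
  Δ.filter (fun G => v ∉ G)

/-- `F` is a facet (maximal face) of `Δ`. -/
def IsFacetOf (Δ : Finset (Finset V)) (F : Finset V) : Prop :=
  F ∈ Δ ∧ ∀ G ∈ Δ, F ⊆ G → F = G

/-- Vertex decomposability. -/
inductive VertexDecomposable : Finset (Finset V) → Prop
  | empty : VertexDecomposable ∅
  | simplex (F : Finset V) : VertexDecomposable F.powerset
  | step (Δ : Finset (Finset V)) (v : V) (hv : {v} ∈ Δ)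
      (hl : VertexDecomposable (linkOf Δ v))
      (hd : VertexDecomposable (deletionOf Δ v))
      (hf : ∀ F : Finset V, IsFacetOf (linkOf Δ v) F → ¬ IsFacetOf (deletionOf Δ v) F) :
      VertexDecomposable Δ

/-- The simplicial join of two complexes. -/
def joinComplex (Δ₁ Δ₂ : Finset (Finset V)) : Finset (Finset V) :=
  (Δ₁ ×ˢ Δ₂).image (fun p => p.1 ∪ p.2)

/- ================= auxiliary lemmas ================= -/

lemma mem_join {Δ₁ Δ₂ : Finset (Finset V)} {H : Finset V} :
    H ∈ joinComplex Δ₁ Δ₂ ↔ ∃ F ∈ Δ₁, ∃ G ∈ Δ₂, F ∪ G = H := by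
  simp [joinComplex, Finset.mem_image, Finset.mem_product]
  tauto

lemma join_comm (Δ₁ Δ₂ : Finset (Finset V)) :
    joinComplex Δ₁ Δ₂ = joinComplex Δ₂ Δ₁ := by
  ext H
  simp only [mem_join]
  constructor
  · rintro ⟨F, hF, G, hG, rfl⟩; exact ⟨G, hG, F, hF, Finset.union_comm G F⟩
  · rintro ⟨G, hG, F, hF, rfl⟩; exact ⟨F, hF, G, hG, Finset.union_comm F G⟩

lemma join_empty_left (Δ : Finset (Finset V)) : joinComplex (∅ : Finset (Finset V)) Δ = ∅ := by
  simp [joinComplex]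

lemma join_empty_right (Δ : Finset (Finset V)) : joinComplex Δ (∅ : Finset (Finset V)) = ∅ := by
  simp [joinComplex]

lemma join_powerset (F G : Finset V) :
    joinComplex F.powerset G.powerset = (F ∪ G).powerset := by
  ext H
  simp only [mem_join, Finset.mem_powerset]
  constructor
  · rintro ⟨a, ha, b, hb, rfl⟩; exact Finset.union_subset_union ha hb
  · intro h
    refine ⟨H ∩ F, Finset.inter_subset_right, H ∩ G, Finset.inter_subset_right, ?_⟩
    rw [← Finset.inter_union_distrib_left, Finset.inter_eq_left.mpr h]

lemma mem_join_iff {Δ₁ Δ₂ : Finset (Finset V)} {A B : Finset V} (hAB : Disjoint A B)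
    (hA : ∀ F ∈ Δ₁, F ⊆ A) (hB : ∀ G ∈ Δ₂, G ⊆ B) {H : Finset V} :
    H ∈ joinComplex Δ₁ Δ₂ ↔ H ∩ A ∈ Δ₁ ∧ H ∩ B ∈ Δ₂ ∧ H ⊆ A ∪ B := by
  rw [mem_join]
  constructor
  · rintro ⟨F, hF, G, hG, rfl⟩
    have hFA := hA F hF
    have hGB := hB G hG
    have hGA : G ∩ A = ∅ :=
      Finset.disjoint_iff_inter_eq_empty.mp ((hAB.symm.mono_left hGB))
    have hFB : F ∩ B = ∅ :=
      Finset.disjoint_iff_inter_eq_empty.mp ((hAB.mono_left hFA))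
    constructor
    · rw [Finset.union_inter_distrib_right, Finset.inter_eq_left.mpr hFA, hGA,
        Finset.union_empty]; exact hF
    constructor
    · rw [Finset.union_inter_distrib_right, Finset.inter_eq_left.mpr hGB, hFB,
        Finset.empty_union]; exact hG
    · exact Finset.union_subset_union hFA hGB
  · rintro ⟨h1, h2, h3⟩
    refine ⟨H ∩ A, h1, H ∩ B, h2, ?_⟩
    rw [← Finset.inter_union_distrib_left, Finset.inter_eq_left.mpr h3]

lemma linkOf_isComplex {Δ : Finset (Finset V)} (hΔ : IsComplex Δ) (v : V) :
    IsComplex (linkOf Δ v) := by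
  intro F hF G hG
  rw [linkOf, Finset.mem_filter] at hF ⊢
  obtain ⟨hF1, hF2, hF3⟩ := hF
  exact ⟨hΔ F hF1 G hG, fun h => hF2 (hG h),
    hΔ _ hF3 _ (Finset.insert_subset_insert v hG)⟩

lemma deletionOf_isComplex {Δ : Finset (Finset V)} (hΔ : IsComplex Δ) (v : V) :
    IsComplex (deletionOf Δ v) := by
  intro F hF G hG
  rw [deletionOf, Finset.mem_filter] at hF ⊢
  exact ⟨hΔ F hF.1 G hG, fun h => hF.2 (hG h)⟩

lemma linkOf_subset {Δ : Finset (Finset V)} {B : Finset V} (hB : ∀ G ∈ Δ, G ⊆ B) (v : V) :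
    ∀ G ∈ linkOf Δ v, G ⊆ B := fun G hG => hB G (Finset.mem_filter.mp hG).1

lemma deletionOf_subset {Δ : Finset (Finset V)} {B : Finset V} (hB : ∀ G ∈ Δ, G ⊆ B) (v : V) :
    ∀ G ∈ deletionOf Δ v, G ⊆ B := fun G hG => hB G (Finset.mem_filter.mp hG).1

lemma link_join {Δ₁ Δ₂ : Finset (Finset V)} {A B : Finset V} (hAB : Disjoint A B)
    (hA : ∀ F ∈ Δ₁, F ⊆ A) (hB : ∀ G ∈ Δ₂, G ⊆ B) {v : V} (hvB : v ∈ B) :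
    linkOf (joinComplex Δ₁ Δ₂) v = joinComplex Δ₁ (linkOf Δ₂ v) := by
  have hvA : v ∉ A := fun h => (Finset.disjoint_left.mp hAB h) hvB
  ext H
  rw [linkOf, Finset.mem_filter, mem_join_iff hAB hA hB,
    mem_join_iff hAB hA (linkOf_subset hB v), mem_join_iff hAB hA hB,
    linkOf, Finset.mem_filter]
  constructor
  · rintro ⟨⟨h1, h2, h3⟩, hv, _, h5, _⟩
    refine ⟨h1, ⟨h2, fun h => hv (Finset.mem_inter.mp h).1, ?_⟩, h3⟩
    rwa [← Finset.insert_inter_of_mem hvB]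
  · rintro ⟨h1, ⟨h2, hv, h4⟩, h3⟩
    have hvH : v ∉ H := fun h => hv (Finset.mem_inter.mpr ⟨h, hvB⟩)
    refine ⟨⟨h1, h2, h3⟩, hvH, ?_, ?_, ?_⟩
    · rwa [Finset.insert_inter_of_notMem hvA]
    · rwa [Finset.insert_inter_of_mem hvB]
    · exact Finset.insert_subset (Finset.mem_union_right A hvB) h3

lemma deletion_join {Δ₁ Δ₂ : Finset (Finset V)} {A B : Finset V} (hAB : Disjoint A B)
    (hA : ∀ F ∈ Δ₁, F ⊆ A) (hB : ∀ G ∈ Δ₂, G ⊆ B) {v : V} (hvB : v ∈ B) :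
    deletionOf (joinComplex Δ₁ Δ₂) v = joinComplex Δ₁ (deletionOf Δ₂ v) := by
  ext H
  rw [deletionOf, Finset.mem_filter, mem_join_iff hAB hA hB,
    mem_join_iff hAB hA (deletionOf_subset hB v), deletionOf, Finset.mem_filter]
  constructor
  · rintro ⟨⟨h1, h2, h3⟩, hv⟩
    exact ⟨h1, ⟨h2, fun h => hv (Finset.mem_inter.mp h).1⟩, h3⟩
  · rintro ⟨h1, ⟨h2, hv⟩, h3⟩
    exact ⟨⟨h1, h2, h3⟩, fun h => hv (Finset.mem_inter.mpr ⟨h, hvB⟩)⟩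

lemma facet_join_right {Δ₁ Δ₂ : Finset (Finset V)} {A B : Finset V} (hAB : Disjoint A B)
    (hA : ∀ F ∈ Δ₁, F ⊆ A) (hB : ∀ G ∈ Δ₂, G ⊆ B) {H : Finset V}
    (h : IsFacetOf (joinComplex Δ₁ Δ₂) H) : IsFacetOf Δ₂ (H ∩ B) := by
  obtain ⟨hmem, hmax⟩ := h
  rw [mem_join_iff hAB hA hB] at hmem
  obtain ⟨h1, h2, h3⟩ := hmem
  refine ⟨h2, fun G hG hsub => ?_⟩
  have hK : (H ∩ A) ∪ G ∈ joinComplex Δ₁ Δ₂ := mem_join.mpr ⟨H ∩ A, h1, G, hG, rfl⟩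
  have hHK : H ⊆ (H ∩ A) ∪ G := by
    intro x hx
    rcases Finset.mem_union.mp (h3 hx) with hxa | hxb
    · exact Finset.mem_union_left _ (Finset.mem_inter.mpr ⟨hx, hxa⟩)
    · exact Finset.mem_union_right _ (hsub (Finset.mem_inter.mpr ⟨hx, hxb⟩))
  have heq := hmax _ hK hHK
  have hGB := hB G hG
  have : H ∩ B = ((H ∩ A) ∪ G) ∩ B := by rw [← heq]
  rw [this, Finset.union_inter_distrib_right, Finset.inter_assoc,
    Finset.disjoint_iff_inter_eq_empty.mp hAB, Finset.inter_empty,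
    Finset.inter_eq_left.mpr hGB, Finset.empty_union]

/-- Key inductive step: decompose the join at a vertex on the `Δ₂` side. -/
lemma join_step {Δ₁ Δ₂ : Finset (Finset V)} {A B : Finset V} (hAB : Disjoint A B)
    (hA : ∀ F ∈ Δ₁, F ⊆ A) (hB : ∀ G ∈ Δ₂, G ⊆ B) (hne : (∅ : Finset V) ∈ Δ₁)
    {v : V} (hv : {v} ∈ Δ₂)
    (hl : VertexDecomposable (joinComplex Δ₁ (linkOf Δ₂ v)))
    (hd : VertexDecomposable (joinComplex Δ₁ (deletionOf Δ₂ v)))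
    (hf : ∀ F : Finset V, IsFacetOf (linkOf Δ₂ v) F → ¬ IsFacetOf (deletionOf Δ₂ v) F) :
    VertexDecomposable (joinComplex Δ₁ Δ₂) := by
  have hvB : v ∈ B := hB {v} hv (Finset.mem_singleton_self v)
  refine VertexDecomposable.step _ v ?_ ?_ ?_ ?_
  · exact mem_join.mpr ⟨∅, hne, {v}, hv, Finset.empty_union {v}⟩
  · rwa [link_join hAB hA hB hvB]
  · rwa [deletion_join hAB hA hB hvB]
  · intro F hFl hFd
    rw [link_join hAB hA hB hvB] at hFl
    rw [deletion_join hAB hA hB hvB] at hFd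
    exact hf (F ∩ B) (facet_join_right hAB hA (linkOf_subset hB v) hFl)
      (facet_join_right hAB hA (deletionOf_subset hB v) hFd)

/-- The join of a simplex with a vertex decomposable complex. -/
lemma join_powerset_vd (F : Finset V) {Δ₂ : Finset (Finset V)} {A B : Finset V}
    (hAB : Disjoint A B) (hFA : F ⊆ A)
    (h₂ : VertexDecomposable Δ₂) (hΔ₂ : IsComplex Δ₂) (hB : ∀ G ∈ Δ₂, G ⊆ B) :
    VertexDecomposable (joinComplex F.powerset Δ₂) := by
  have hA : ∀ H ∈ F.powerset, H ⊆ A := fun H hH =>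
    (Finset.mem_powerset.mp hH).trans hFA
  induction h₂ with
  | empty => rw [join_empty_right]; exact VertexDecomposable.empty
  | simplex G => rw [join_powerset]; exact VertexDecomposable.simplex _
  | step Δ v hv hl hd hf ihl ihd =>
    refine join_step hAB hA hB (Finset.empty_mem_powerset F) hv
      (ihl (linkOf_isComplex hΔ₂ v) (linkOf_subset hB v))
      (ihd (deletionOf_isComplex hΔ₂ v) (deletionOf_subset hB v)) hf

/-- the join of two vertex decomposable complexes on disjoint vertex
sets is vertex decomposable. -/
theorem stmt4 (Δ₁ Δ₂ : Finset (Finset V)) (A B : Finset V) (hAB : Disjoint A B)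
    (hΔ₁ : IsComplex Δ₁) (hΔ₂ : IsComplex Δ₂)
    (hA : ∀ F ∈ Δ₁, F ⊆ A) (hB : ∀ G ∈ Δ₂, G ⊆ B)
    (h₁ : VertexDecomposable Δ₁) (h₂ : VertexDecomposable Δ₂) :
    VertexDecomposable (joinComplex Δ₁ Δ₂) := by
  induction h₁ with
  | empty => rw [join_empty_left]; exact VertexDecomposable.empty
  | simplex F =>
    exact join_powerset_vd F hAB (hA F (Finset.mem_powerset_self F)) h₂ hΔ₂ hB
  | step Δ v hv hl hd hf ihl ihd =>
    rcases eq_or_ne Δ₂ ∅ with rfl | hne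
    · rw [join_empty_right]; exact VertexDecomposable.empty
    · have hne₂ : (∅ : Finset V) ∈ Δ₂ := by
        obtain ⟨G, hG⟩ := Finset.nonempty_iff_ne_empty.mpr hne
        exact hΔ₂ G hG ∅ (Finset.empty_subset G)
      rw [join_comm]
      refine join_step hAB.symm hB hA hne₂ hv ?_ ?_ hf
      · rw [join_comm]
        exact ihl (linkOf_isComplex hΔ₁ v) (linkOf_subset hA v)
      · rw [join_comm]
        exact ihd (deletionOf_isComplex hΔ₁ v) (deletionOf_subset hA v)
end

section
/- Let Δ be a shellable simplicial complex with shelling order F_1, …, F_m, and suppose v is a vertex of a simplicial complex Γ = {v} * Δ ∪ Δ' where no facet of Δ (the link of v) is a facet of Δ' (the deletion of v). If E_1,…,E_a is a shelling of Δ' and G_1,…,G_b is a shelling of Δ, then E_1,…,E_a, G_1∪{v},…,G_b∪{v} is a shelling of Γ. -/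
variable {V : Type*} [DecidableEq V]

/-- `l` is a shelling order of the complex `Δ`: it enumerates the facets of `Δ`
without repetition, and for each `j > 0` the intersection of the `j`-th facet
with the subcomplex generated by the previous facets is pure of dimension
`dim(F_j) - 1`. -/
def IsShelling (Δ : Finset (Finset V)) (l : List (Finset V)) : Prop :=
  l.Nodup ∧ (∀ F : Finset V, IsFacetOf Δ F ↔ F ∈ l) ∧
  ∀ j, j < l.length → 0 < j →
    ∀ G : Finset V, G ⊆ l.getD j ∅ → (∃ k < j, G ⊆ l.getD k ∅) →
      ∃ H : Finset V, G ⊆ H ∧ H ⊆ l.getD j ∅ ∧ (∃ k < j, H ⊆ l.getD k ∅) ∧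
        H.card + 1 = (l.getD j ∅).card

/-!
The facets of `Γ = Δ' ∪ ({v} * Δ)` are those of `Δ'` together with the cones `F ∪ {v}` over the
facets `F` of `Δ` (a facet of `Δ` lies in a larger face of `Δ'`, so it is no facet of `Γ`).
Along `E` the shelling condition is that of `Δ'`. At a cone `F ∪ {v}`, a face of the earlier
facets either avoids `v`, and then lies in the codimension-one face `F`, which is covered by a
facet of `Δ'`; or it contains `v`, and then only an earlier cone can hold it, so the shelling
condition of `Δ` at `F` applies after removing `v`.
-/

section Facets

variable {α : Type*} {Δ Δ₁ Δ₂ : Finset (Finset α)} {F : Finset α}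

lemma exists_isFacetOf_superset (hF : F ∈ Δ) : ∃ H, IsFacetOf Δ H ∧ F ⊆ H := by
  obtain ⟨H, hFH, hH⟩ := (Δ : Set (Finset α)).toFinite.exists_le_maximal (a := F) hF
  exact ⟨H, ⟨hH.prop, fun G hG hHG => le_antisymm hHG (hH.2 hG hHG)⟩, hFH⟩

lemma IsFacetOf.of_subset (h : Δ₁ ⊆ Δ₂) (hF : F ∈ Δ₁) (hF₂ : IsFacetOf Δ₂ F) :
    IsFacetOf Δ₁ F :=
  ⟨hF, fun G hG => hF₂.2 G (h hG)⟩

end Facets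

section Cone

variable {α : Type*} [DecidableEq α] {Δ Δ' : Finset (Finset α)} {v : α}

lemma eq_of_insert_eq_insert {s t : Finset α} (hs : v ∉ s) (ht : v ∉ t)
    (h : insert v s = insert v t) : s = t := by
  rw [← Finset.erase_insert hs, h, Finset.erase_insert ht]

lemma isFacetOf_union_image_insert_of_isFacetOf (hvΔ' : ∀ F ∈ Δ', v ∉ F) (hsub : Δ ⊆ Δ')
    (hfac : ∀ F : Finset α, IsFacetOf Δ F → ¬ IsFacetOf Δ' F) {F : Finset α}
    (hF : IsFacetOf Δ' F) : IsFacetOf (Δ' ∪ Δ.image (insert v)) F := by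
  refine ⟨Finset.mem_union_left _ hF.1, fun H hH hFH => ?_⟩
  rcases Finset.mem_union.mp hH with hH | hH
  · exact hF.2 H hH hFH
  · obtain ⟨K, hK, rfl⟩ := Finset.mem_image.mp hH
    obtain rfl : F = K :=
      hF.2 K (hsub hK) ((Finset.subset_insert_iff_of_notMem (hvΔ' F hF.1)).1 hFH)
    exact absurd hF (hfac F (hF.of_subset hsub hK))

lemma isFacetOf_union_image_insert_insert (hvΔ : ∀ F ∈ Δ, v ∉ F) (hvΔ' : ∀ F ∈ Δ', v ∉ F)
    {K : Finset α} (hK : IsFacetOf Δ K) : IsFacetOf (Δ' ∪ Δ.image (insert v)) (insert v K) := by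
  refine ⟨Finset.mem_union_right _ (Finset.mem_image_of_mem _ hK.1), fun H hH hKH => ?_⟩
  rcases Finset.mem_union.mp hH with hH | hH
  · exact absurd (hKH (Finset.mem_insert_self v K)) (hvΔ' H hH)
  · obtain ⟨L, hL, rfl⟩ := Finset.mem_image.mp hH
    rw [hK.2 L hL ((Finset.insert_subset_insert_iff (hvΔ K hK.1)).1 hKH)]

lemma IsFacetOf.of_union_image_insert (hvΔ : ∀ F ∈ Δ, v ∉ F) {F : Finset α}
    (hF : IsFacetOf (Δ' ∪ Δ.image (insert v)) F) :
    IsFacetOf Δ' F ∨ ∃ K, IsFacetOf Δ K ∧ insert v K = F := by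
  rcases Finset.mem_union.mp hF.1 with h | h
  · exact .inl (hF.of_subset Finset.subset_union_left h)
  · obtain ⟨K, hK, rfl⟩ := Finset.mem_image.mp h
    refine .inr ⟨K, ⟨hK, fun L hL hKL => ?_⟩, rfl⟩
    exact eq_of_insert_eq_insert (hvΔ K hK) (hvΔ L hL) <|
      hF.2 _ (Finset.mem_union_right _ (Finset.mem_image_of_mem _ hL))
        (Finset.insert_subset_insert v hKL)

lemma isFacetOf_union_image_insert_iff (hvΔ : ∀ F ∈ Δ, v ∉ F) (hvΔ' : ∀ F ∈ Δ', v ∉ F)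
    (hsub : Δ ⊆ Δ') (hfac : ∀ F : Finset α, IsFacetOf Δ F → ¬ IsFacetOf Δ' F) (F : Finset α) :
    IsFacetOf (Δ' ∪ Δ.image (insert v)) F ↔
      IsFacetOf Δ' F ∨ ∃ K, IsFacetOf Δ K ∧ insert v K = F := by
  refine ⟨IsFacetOf.of_union_image_insert hvΔ, ?_⟩
  rintro (hF | ⟨K, hK, rfl⟩)
  · exact isFacetOf_union_image_insert_of_isFacetOf hvΔ' hsub hfac hF
  · exact isFacetOf_union_image_insert_insert hvΔ hvΔ' hK

end Cone

section Shelling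

variable {α : Type*} {E L : List (Finset α)} {i j : ℕ} {G : Finset α}

def InPrefixComplex (l : List (Finset α)) (j : ℕ) (G : Finset α) : Prop :=
  ∃ k < j, G ⊆ l.getD k ∅

def ShellsAt (l : List (Finset α)) (j : ℕ) : Prop :=
  ∀ G ⊆ l.getD j ∅, InPrefixComplex l j G →
    ∃ H, G ⊆ H ∧ H ⊆ l.getD j ∅ ∧ InPrefixComplex l j H ∧ H.card + 1 = (l.getD j ∅).card

lemma isShelling_iff {Δ : Finset (Finset α)} {l : List (Finset α)} :
    IsShelling Δ l ↔
      l.Nodup ∧ (∀ F, IsFacetOf Δ F ↔ F ∈ l) ∧ ∀ j < l.length, 0 < j → ShellsAt l j :=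
  Iff.rfl

lemma InPrefixComplex.mono {l : List (Finset α)} (h : InPrefixComplex l i G) (hij : i ≤ j) :
    InPrefixComplex l j G :=
  let ⟨k, hk, hG⟩ := h
  ⟨k, hk.trans_le hij, hG⟩

lemma inPrefixComplex_length_of_mem {Δ : Finset (Finset α)} (hE : ∀ F, IsFacetOf Δ F → F ∈ E)
    (hG : G ∈ Δ) : InPrefixComplex E E.length G := by
  obtain ⟨F, hF, hGF⟩ := exists_isFacetOf_superset hG
  obtain ⟨k, hk, rfl⟩ := List.getElem_of_mem (hE F hF)
  exact ⟨k, hk, by rwa [List.getD_eq_getElem _ _ hk]⟩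

lemma inPrefixComplex_append_iff (hj : j ≤ E.length) :
    InPrefixComplex (E ++ L) j G ↔ InPrefixComplex E j G :=
  exists_congr fun _ => and_congr_right fun hk => by
    rw [List.getD_append _ _ _ _ (hk.trans_le hj)]

lemma ShellsAt.append (hj : j < E.length) (h : ShellsAt E j) : ShellsAt (E ++ L) j := by
  simpa only [ShellsAt, inPrefixComplex_append_iff hj.le, List.getD_append _ _ _ _ hj] using h

variable [DecidableEq α] {v : α}

lemma getD_append_map_insert (hi : i < L.length) :
    (E ++ L.map (insert v)).getD (E.length + i) ∅ = insert v (L.getD i ∅) := by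
  rw [List.getD_append_right _ _ _ _ (by omega), Nat.add_sub_cancel_left,
    List.getD_eq_getElem _ _ (by simpa using hi), List.getD_eq_getElem _ _ hi, List.getElem_map]

lemma InPrefixComplex.insert_append_map_insert (hi : i ≤ L.length) (h : InPrefixComplex L i G) :
    InPrefixComplex (E ++ L.map (insert v)) (E.length + i) (insert v G) := by
  obtain ⟨k, hk, hG⟩ := h
  refine ⟨E.length + k, by omega, ?_⟩
  rw [getD_append_map_insert (by omega)]
  exact Finset.insert_subset_insert v hG

lemma InPrefixComplex.erase_of_append_map_insert (hvE : ∀ F ∈ E, v ∉ F) (hi : i ≤ L.length)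
    (hvG : v ∈ G) (h : InPrefixComplex (E ++ L.map (insert v)) (E.length + i) G) :
    InPrefixComplex L i (G.erase v) := by
  obtain ⟨k, hk, hG⟩ := h
  rcases lt_or_ge k E.length with hkE | hkE
  · rw [List.getD_append _ _ _ _ hkE, List.getD_eq_getElem _ _ hkE] at hG
    exact absurd (hG hvG) (hvE _ (List.getElem_mem hkE))
  · obtain ⟨k, rfl⟩ := Nat.exists_eq_add_of_le hkE
    rw [getD_append_map_insert (by omega)] at hG
    exact ⟨k, by omega, Finset.subset_insert_iff.1 hG⟩

lemma shellsAt_append_map_insert (hvE : ∀ F ∈ E, v ∉ F) (hi : i < L.length)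
    (hvL : v ∉ L.getD i ∅) (hL : 0 < i → ShellsAt L i)
    (hcov : InPrefixComplex E E.length (L.getD i ∅)) :
    ShellsAt (E ++ L.map (insert v)) (E.length + i) := by
  intro G hG hprev
  rw [getD_append_map_insert hi] at hG ⊢
  by_cases hvG : v ∈ G
  · have hprev' := hprev.erase_of_append_map_insert hvE hi.le hvG
    have hi0 : 0 < i := by obtain ⟨k, hk, -⟩ := hprev'; omega
    obtain ⟨H, hGH, hHL, hHprev, hcard⟩ :=
      hL hi0 (G.erase v) (Finset.subset_insert_iff.1 hG) hprev'
    have hvH : v ∉ H := fun h => hvL (hHL h)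
    refine ⟨insert v H, Finset.subset_insert_iff.2 hGH, Finset.insert_subset_insert v hHL,
      hHprev.insert_append_map_insert hi.le, ?_⟩
    rw [Finset.card_insert_of_notMem hvH, Finset.card_insert_of_notMem hvL, hcard]
  · refine ⟨L.getD i ∅, (Finset.subset_insert_iff_of_notMem hvG).1 hG, Finset.subset_insert v _,
      ((inPrefixComplex_append_iff le_rfl).2 hcov).mono (Nat.le_add_right _ _),
      (Finset.card_insert_of_notMem hvL).symm⟩

end Shelling

theorem stmt13_general (Δ Δ' : Finset (Finset V)) (v : V)
    (hvΔ : ∀ F ∈ Δ, v ∉ F) (hvΔ' : ∀ F ∈ Δ', v ∉ F)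
    (hsub : Δ ⊆ Δ')
    (hfac : ∀ F : Finset V, IsFacetOf Δ F → ¬ IsFacetOf Δ' F)
    (E G : List (Finset V))
    (hE : IsShelling Δ' E) (hG : IsShelling Δ G) :
    IsShelling (Δ' ∪ Δ.image (insert v)) (E ++ G.map (insert v)) := by
  obtain ⟨hEnd, hEfac, hEsh⟩ := isShelling_iff.1 hE
  obtain ⟨hGnd, hGfac, hGsh⟩ := isShelling_iff.1 hG
  have hvE : ∀ F ∈ E, v ∉ F := fun F hF => hvΔ' F ((hEfac F).2 hF).1
  have hvG : ∀ F ∈ G, v ∉ F := fun F hF => hvΔ F ((hGfac F).2 hF).1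
  refine isShelling_iff.2 ⟨?_, fun F => ?_, fun j hj hj0 => ?_⟩
  · refine hEnd.append
      (hGnd.map_on fun K hK L hL => eq_of_insert_eq_insert (hvG K hK) (hvG L hL)) ?_
    intro F hFE hFG
    obtain ⟨K, -, rfl⟩ := List.mem_map.1 hFG
    exact hvE _ hFE (Finset.mem_insert_self v K)
  · rw [isFacetOf_union_image_insert_iff hvΔ hvΔ' hsub hfac, List.mem_append, List.mem_map, hEfac]
    simp only [hGfac]
  · rcases lt_or_ge j E.length with hjE | hjE
    · exact (hEsh j hjE hj0).append hjE
    · obtain ⟨i, rfl⟩ := Nat.exists_eq_add_of_le hjE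
      have hi : i < G.length := by simpa using hj
      have hGi : G.getD i ∅ ∈ G := by
        rw [List.getD_eq_getElem _ _ hi]
        exact List.getElem_mem hi
      exact shellsAt_append_map_insert hvE hi (hvG _ hGi) (hGsh i hi)
        (inPrefixComplex_length_of_mem (fun F => (hEfac F).1) (hsub ((hGfac _).2 hGi).1))

/-- if `Γ = ({v} * Δ) ∪ Δ'` where `Δ` is the link of `v` and `Δ'`
the deletion of `v`, no facet of the link is a facet of the deletion, `E` is a
shelling of the deletion `Δ'` and `G` is a shelling of the link `Δ`, then
`E` followed by the facets of the link with `v` adjoined is a shelling of `Γ`. -/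
theorem stmt13 (Δ Δ' : Finset (Finset V)) (v : V)
    (hΔ : IsComplex Δ) (hΔ' : IsComplex Δ')
    (hvΔ : ∀ F ∈ Δ, v ∉ F) (hvΔ' : ∀ F ∈ Δ', v ∉ F)
    (hsub : Δ ⊆ Δ')
    (hfac : ∀ F : Finset V, IsFacetOf Δ F → ¬ IsFacetOf Δ' F)
    (E G : List (Finset V))
    (hE : IsShelling Δ' E) (hG : IsShelling Δ G) :
    IsShelling (Δ' ∪ Δ.image (insert v)) (E ++ G.map (insert v)) :=
  stmt13_general Δ Δ' v hvΔ hvΔ' hsub hfac E G hE hG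
end

section
/- Let L be a finite join-semidistributive lattice and let a ∈ L. If for each lower cover a' ⋖ a we set j_{a'} = min{c ∈ L : a' ∨ c = a}, then the join of the set {j_{a'} : a' ⋖ a} equals a. -/
theorem Finset.sup_eq_of_forall_covBy_exists_not_le {ι L : Type*} [Lattice L] [OrderBot L]
    [IsStronglyCoatomic L] {s : Finset ι} {f : ι → L} {a : L}
    (hle : ∀ i ∈ s, f i ≤ a) (hcov : ∀ b, b ⋖ a → ∃ i ∈ s, ¬ f i ≤ b) :
    s.sup f = a := by
  refine (Finset.sup_le hle).eq_of_not_lt fun hlt => ?_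
  obtain ⟨b, hsup, hb⟩ := exists_le_covBy_of_lt hlt
  obtain ⟨i, hi, hfi⟩ := hcov b hb
  exact hfi ((Finset.le_sup hi).trans hsup)

theorem le_of_isLeast_sup_eq {L : Type*} [Lattice L] {a b c : L}
    (hc : IsLeast {x | b ⊔ x = a} c) : c ≤ a :=
  hc.1 ▸ le_sup_right

theorem not_le_of_isLeast_sup_eq {L : Type*} [Lattice L] {a b c : L} (hb : b ⋖ a)
    (hc : IsLeast {x | b ⊔ x = a} c) : ¬ c ≤ b := fun h =>
  hb.ne (by rw [← hc.1, sup_eq_left.2 h])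

open scoped Classical in
theorem stmt19_general {L : Type*} [Lattice L] [OrderBot L] [Fintype L]
    (a : L) (j : L → L)
    (hj : ∀ a' : L, a' ⋖ a → IsLeast {c : L | a' ⊔ c = a} (j a')) :
    (Finset.univ.filter (fun a' : L => a' ⋖ a)).sup j = a := by
  refine Finset.sup_eq_of_forall_covBy_exists_not_le (fun a' ha' => ?_) fun b hb => ?_
  · exact le_of_isLeast_sup_eq (hj a' (Finset.mem_filter.1 ha').2)
  · exact ⟨b, Finset.mem_filter.2 ⟨Finset.mem_univ b, hb⟩, not_le_of_isLeast_sup_eq hb (hj b hb)⟩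

open scoped Classical in
/-- in a finite join-semidistributive lattice, the canonical joinands
of `a` — the minimal elements `j a'` of `{c | a' ⊔ c = a}` over the lower covers
`a' ⋖ a` — join to `a`. (For `a = ⊥` the join is empty and equals `⊥`.) -/
theorem stmt19 {L : Type*} [Lattice L] [OrderBot L] [Fintype L]
    (jsd : ∀ x y z : L, x ⊔ y = x ⊔ z → x ⊔ y = x ⊔ (y ⊓ z))
    (a : L) (j : L → L)
    (hj : ∀ a' : L, a' ⋖ a → IsLeast {c : L | a' ⊔ c = a} (j a')) :
    (Finset.univ.filter (fun a' : L => a' ⋖ a)).sup j = a :=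
  stmt19_general a j hj
end
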